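/- Let ω be a weight on (0,1] with ∫₀¹ r·ω(1-r) dr < ∞. Let γ be holomorphic on a neighborhood of {ζ ∈ ℂ : |ζ| ≥ 1} with Laurent coefficients c_j (j ∈ ℤ) on the unit circle, and let h(z) = Σ_{k=0}^N a_k z^k be a polynomial. Then −(1/(2πi)) ∮_{|ξ|=1} γ(ξ) h(ξ) dξ = −Σ_{k=0}^N c_{−(k+1)} a_k, and |−(1/(2πi)) ∮_{|ξ|=1} γ(ξ) h(ξ) dξ| ≤ (1/π) ρ(γ) ‖h‖_{B₂(𝔻,ω)}, where ρ(γ) = (π Σ_{k≥1} |c_{−k}|²/ω_{k-1})^{1/2}. -/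

import Mathlib

/-!
Writing `h = Σ aₖ zᵏ`, the contour integral of `γ ξ ξᵏ` over the unit circle is `2πi c₋₍ₖ₊₁₎`, which
gives the identity. In polar coordinates the orthogonality of the `e^{ikθ}` turns the weighted
norm into `‖h‖² = π Σ ‖aₖ‖² ωₖ`, and Cauchy–Schwarz with weights `ωₖ` gives the bound. The series
`Σ ‖c₋₍ₖ₊₁₎‖² / ωₖ` converges (so the `tsum` is not a junk `0`): `γ` is holomorphic on
`{|ζ| ≥ s}` for some `s < 1`, so `c₋₍ₖ₊₁₎ = O(sᵏ)`, while `ωₖ ≳ t^{2k}` for every `t < 1`.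
-/

open MeasureTheory Set

/-- `ωₖ = 2∫₀¹ r^{2k+1} ω(1-r) dr`. -/
noncomputable def wk (ω : ℝ → ℝ) (k : ℕ) : ℝ :=
  2 * ∫ r in Set.Ioo (0:ℝ) 1, r ^ (2 * k + 1) * ω (1 - r)

open Complex Real ComplexConjugate

theorem integral_exp_int_mul_I (n : ℤ) :
    ∫ θ in (-π)..π, exp (n * θ * I) = if n = 0 then (2 * π : ℂ) else 0 := by
  split_ifs with hn
  · simp [hn]; ring
  · have hnI : (n : ℂ) * I ≠ 0 := by simp [hn]
    simp_rw [mul_right_comm _ _ I]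
    rw [integral_exp_mul_complex hnI]
    have hper : exp (n * I * π) = exp (n * I * ↑(-π)) := by
      rw [exp_eq_exp_iff_exists_int]
      exact ⟨n, by push_cast; ring⟩
    rw [hper, sub_self, zero_div]

theorem integral_norm_sq_sum_exp (s : Finset ℕ) (b : ℕ → ℂ) :
    ∫ θ in (-π)..π, ‖∑ k ∈ s, b k * exp (k * θ * I)‖ ^ 2 = 2 * π * ∑ k ∈ s, ‖b k‖ ^ 2 := by
  have hexpand : ∀ θ : ℝ, ((‖∑ k ∈ s, b k * exp (k * θ * I)‖ ^ 2 : ℝ) : ℂ) =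
      ∑ j ∈ s, ∑ k ∈ s, b j * conj (b k) * exp (((j : ℤ) - (k : ℤ) : ℤ) * θ * I) := by
    intro θ
    rw [ofReal_pow, ← mul_conj', map_sum, Finset.sum_mul_sum]
    refine Finset.sum_congr rfl fun j _ => Finset.sum_congr rfl fun k _ => ?_
    rw [map_mul, ← exp_conj]
    simp only [map_mul, conj_natCast, conj_ofReal, conj_I]
    rw [mul_mul_mul_comm, ← Complex.exp_add]
    push_cast
    ring_nf
  have hterm : ∀ j k : ℕ, IntervalIntegrable
      (fun θ : ℝ => b j * conj (b k) * exp (((j : ℤ) - (k : ℤ) : ℤ) * θ * I)) volume (-π) π :=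
    fun j k => (by fun_prop : Continuous _).intervalIntegrable _ _
  apply ofReal_injective
  rw [intervalIntegral.integral_ofReal.symm]
  simp_rw [hexpand]
  rw [intervalIntegral.integral_finsetSum fun j _ =>
    (by fun_prop : Continuous fun θ : ℝ => ∑ k ∈ s,
      b j * conj (b k) * exp (((j : ℤ) - (k : ℤ) : ℤ) * θ * I)).intervalIntegrable _ _]
  rw [ofReal_mul, ofReal_sum, Finset.mul_sum]
  refine Finset.sum_congr rfl fun j hj => ?_
  rw [intervalIntegral.integral_finsetSum fun k _ => hterm j k]
  simp_rw [intervalIntegral.integral_const_mul, integral_exp_int_mul_I, sub_eq_zero, Nat.cast_inj,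
    mul_ite, mul_zero, Finset.sum_ite_eq, if_pos hj, mul_conj']
  push_cast
  ring

noncomputable def laurentCoeff (γ : ℂ → ℂ) (j : ℤ) : ℂ :=
  (1 / (2 * π) : ℂ) * ∫ θ in (0 : ℝ)..(2 * π), γ (exp (θ * I)) * exp (-(j : ℂ) * θ * I)

theorem circleIntegral_mul_pow_eq_laurentCoeff (γ : ℂ → ℂ) (k : ℕ) :
    (∮ ξ in C(0, 1), γ ξ * ξ ^ k) = 2 * π * I * laurentCoeff γ (-(k + 1 : ℤ)) := by
  have hintegrand : ∀ θ : ℝ, deriv (circleMap 0 1) θ • (γ (circleMap 0 1 θ) * circleMap 0 1 θ ^ k)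
      = I * (γ (exp (θ * I)) * exp (-((-(k + 1 : ℤ) : ℤ) : ℂ) * θ * I)) := by
    intro θ
    simp only [deriv_circleMap, circleMap, ofReal_one, one_mul, zero_add, smul_eq_mul,
      ← Complex.exp_nat_mul]
    rw [show -((-(k + 1 : ℤ) : ℤ) : ℂ) * θ * I = θ * I + k * (θ * I) by push_cast; ring,
      Complex.exp_add]
    ring
  have hπ : (π : ℂ) ≠ 0 := ofReal_ne_zero.mpr pi_ne_zero
  rw [circleIntegral, intervalIntegral.integral_congr fun θ _ => hintegrand θ,
    intervalIntegral.integral_const_mul, laurentCoeff, ← mul_assoc]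
  congr 1
  field_simp

theorem circleIntegral_mul_sum_pow {γ : ℂ → ℂ} (hγ : ContinuousOn γ (Metric.sphere 0 1))
    (s : Finset ℕ) (a : ℕ → ℂ) :
    (∮ ξ in C(0, 1), γ ξ * ∑ k ∈ s, a k * ξ ^ k)
      = 2 * π * I * ∑ k ∈ s, laurentCoeff γ (-(k + 1 : ℤ)) * a k := by
  have hint : ∀ k ∈ s, CircleIntegrable (fun ξ => a k * (γ ξ * ξ ^ k)) 0 1 := fun k _ =>
    (continuousOn_const.mul (hγ.mul (continuous_pow k).continuousOn)).circleIntegrable zero_le_one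
  simp_rw [Finset.mul_sum, mul_left_comm (γ _) (a _)]
  rw [circleIntegral.integral_fun_sum hint]
  simp_rw [circleIntegral.integral_const_mul, circleIntegral_mul_pow_eq_laurentCoeff]
  exact Finset.sum_congr rfl fun k _ => by ring

theorem exists_radius_lt_one_of_exterior_subset {U : Set ℂ} (hU : IsOpen U)
    (hUnbhd : {ζ : ℂ | 1 ≤ ‖ζ‖} ⊆ U) : ∃ s ∈ Ioo (0 : ℝ) 1, ∀ z : ℂ, s ≤ ‖z‖ → z ∈ U := by
  have hcompl : Uᶜ ⊆ Metric.ball (0 : ℂ) 1 := fun z hz => by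
    rw [mem_ball_zero_iff]
    by_contra h
    exact hz (hUnbhd (not_lt.mp h))
  obtain ⟨r, hr1, hr⟩ := exists_lt_subset_ball hU.isClosed_compl hcompl
  refine ⟨max r (1 / 2), ⟨by positivity, max_lt hr1 (by norm_num)⟩, fun z hz => ?_⟩
  by_contra hzU
  linarith [mem_ball_zero_iff.mp (hr hzU), le_max_left r (1 / 2)]

/-- Shrinking the contour to the circle of radius `s` gives `c₋₍ₖ₊₁₎ = O(sᵏ)`. -/
theorem exists_norm_laurentCoeff_neg_le {γ : ℂ → ℂ} {s : ℝ} (hs : 0 < s) (hs1 : s ≤ 1)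
    (hγ : DifferentiableOn ℂ γ (Metric.closedBall 0 1 \ Metric.ball 0 s)) :
    ∃ A, ∀ k : ℕ, ‖laurentCoeff γ (-(k + 1 : ℤ))‖ ≤ A * s ^ k := by
  have hsphere : Metric.sphere (0 : ℂ) s ⊆ Metric.closedBall 0 1 \ Metric.ball 0 s := fun z hz =>
    ⟨Metric.closedBall_subset_closedBall hs1 (Metric.sphere_subset_closedBall hz),
      by simp [mem_sphere_zero_iff_norm.mp hz]⟩
  obtain ⟨M, hM⟩ :=
    (isCompact_sphere (0 : ℂ) s).exists_bound_of_continuousOn (hγ.continuousOn.mono hsphere)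
  refine ⟨M * s, fun k => ?_⟩
  have hopen : IsOpen (Metric.ball (0 : ℂ) 1 \ Metric.closedBall 0 s) :=
    Metric.isOpen_ball.sdiff Metric.isClosed_closedBall
  have hγk : DifferentiableOn ℂ (fun ξ => γ ξ * ξ ^ k) (Metric.closedBall 0 1 \ Metric.ball 0 s) :=
    hγ.mul (differentiableOn_pow k)
  have hshrink : (∮ ξ in C(0, 1), γ ξ * ξ ^ k) = ∮ ξ in C(0, s), γ ξ * ξ ^ k :=
    Complex.circleIntegral_eq_of_differentiable_on_annulus_off_countable hs hs1 countable_empty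
      hγk.continuousOn fun z hz => (hγk.mono (sdiff_subset_sdiff Metric.ball_subset_closedBall
        Metric.ball_subset_closedBall)).differentiableAt (hopen.mem_nhds hz.1)
  have hbound : ‖∮ ξ in C(0, s), γ ξ * ξ ^ k‖ ≤ 2 * π * s * (M * s ^ k) :=
    circleIntegral.norm_integral_le_of_norm_le_const hs.le fun z hz => by
      rw [norm_mul, norm_pow, mem_sphere_zero_iff_norm.mp hz]
      gcongr
      exact hM z hz
  rw [← hshrink, circleIntegral_mul_pow_eq_laurentCoeff, norm_mul] at hbound
  have h2πI : ‖2 * (π : ℂ) * I‖ = 2 * π := by simp [pi_pos.le]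
  rw [h2πI] at hbound
  nlinarith [pi_pos]

theorem summable_norm_sq_div_of_geometric_bounds {E : Type*} [SeminormedAddCommGroup E]
    {x : ℕ → E} {w : ℕ → ℝ} {A B q t : ℝ} (hB : 0 < B) (hq : 0 ≤ q) (hqt : q ^ 2 < t)
    (hx : ∀ k, ‖x k‖ ≤ A * q ^ k) (hw : ∀ k, B * t ^ k ≤ w k) :
    Summable fun k => ‖x k‖ ^ 2 / w k := by
  have ht : 0 < t := (pow_nonneg hq 2).trans_lt hqt
  have hBt : ∀ k, 0 < B * t ^ k := fun k => by positivity
  refine Summable.of_nonneg_of_le (fun k => div_nonneg (sq_nonneg _) ((hBt k).trans_le (hw k)).le)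
    (fun k => ?_) ((summable_geometric_of_lt_one (by positivity)
      ((div_lt_one ht).mpr hqt)).mul_left (A ^ 2 / B))
  calc ‖x k‖ ^ 2 / w k ≤ (A * q ^ k) ^ 2 / (B * t ^ k) :=
        div_le_div₀ (sq_nonneg _) (pow_le_pow_left₀ (norm_nonneg _) (hx k) 2) (hBt k) (hw k)
    _ = A ^ 2 / B * (q ^ 2 / t) ^ k := by rw [div_pow, ← pow_mul, mul_comm 2 k, pow_mul]; ring

theorem norm_sum_mul_le_sqrt_tsum_mul_sqrt_sum {R : Type*} [SeminormedRing R] {x y : ℕ → R}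
    {w : ℕ → ℝ} (hw : ∀ k, 0 < w k) (hsum : Summable fun k => ‖x k‖ ^ 2 / w k) (s : Finset ℕ) :
    ‖∑ k ∈ s, x k * y k‖ ≤ √(∑' k, ‖x k‖ ^ 2 / w k) * √(∑ k ∈ s, ‖y k‖ ^ 2 * w k) :=
  calc ‖∑ k ∈ s, x k * y k‖ ≤ ∑ k ∈ s, ‖x k‖ / √(w k) * (‖y k‖ * √(w k)) := by
        refine (norm_sum_le _ _).trans (Finset.sum_le_sum fun k _ => ?_)
        have hsqrt : √(w k) ≠ 0 := (Real.sqrt_pos.mpr (hw k)).ne'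
        calc ‖x k * y k‖ ≤ ‖x k‖ * ‖y k‖ := norm_mul_le _ _
          _ = ‖x k‖ / √(w k) * (‖y k‖ * √(w k)) := by field_simp
    _ ≤ √(∑ k ∈ s, (‖x k‖ / √(w k)) ^ 2) * √(∑ k ∈ s, (‖y k‖ * √(w k)) ^ 2) :=
        Real.sum_mul_le_sqrt_mul_sqrt _ _ _
    _ ≤ √(∑' k, ‖x k‖ ^ 2 / w k) * √(∑ k ∈ s, ‖y k‖ ^ 2 * w k) := by
        simp_rw [div_pow, mul_pow, Real.sq_sqrt (hw _).le]
        gcongr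
        exact hsum.sum_le_tsum _ fun k _ => div_nonneg (sq_nonneg _) (hw k).le

section Weight

variable {ω : ℝ → ℝ}

theorem weight_comp_pos (hpos : ∀ t ∈ Ioc (0 : ℝ) 1, 0 < ω t) {r : ℝ} (hr : r ∈ Ioo (0 : ℝ) 1) :
    0 < ω (1 - r) :=
  hpos _ ⟨by linarith [hr.2], by linarith [hr.1]⟩

theorem integrableOn_mul_weight (hmeas : Measurable ω) (hpos : ∀ t ∈ Ioc (0 : ℝ) 1, 0 < ω t)
    (hint : ∫⁻ r in Ioo (0 : ℝ) 1, ENNReal.ofReal (r * ω (1 - r)) < ⊤) :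
    IntegrableOn (fun r => r * ω (1 - r)) (Ioo 0 1) := by
  refine (lintegral_ofReal_ne_top_iff_integrable ?_ ?_).mp hint.ne
  · exact (measurable_id.mul (hmeas.comp (measurable_const.sub measurable_id))).aestronglyMeasurable
  · filter_upwards [ae_restrict_mem measurableSet_Ioo] with r hr
    exact mul_nonneg hr.1.le (weight_comp_pos hpos hr).le

theorem integrableOn_pow_succ_mul_weight (hmeas : Measurable ω)
    (hpos : ∀ t ∈ Ioc (0 : ℝ) 1, 0 < ω t)
    (hint : ∫⁻ r in Ioo (0 : ℝ) 1, ENNReal.ofReal (r * ω (1 - r)) < ⊤) (n : ℕ) :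
    IntegrableOn (fun r => r ^ (n + 1) * ω (1 - r)) (Ioo 0 1) := by
  have hbound : ∀ᵐ r ∂volume.restrict (Ioo (0 : ℝ) 1), ‖r ^ n‖ ≤ 1 := by
    filter_upwards [ae_restrict_mem measurableSet_Ioo] with r hr
    rw [norm_pow, Real.norm_of_nonneg hr.1.le]
    exact pow_le_one₀ hr.1.le hr.2.le
  refine ((integrableOn_mul_weight hmeas hpos hint).bdd_mul
    (by fun_prop : Continuous fun r : ℝ => r ^ n).aestronglyMeasurable hbound).congr ?_
  exact Filter.Eventually.of_forall fun r => by simp only [pow_succ]; ring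

theorem integrableOn_weight_Ioo (hmeas : Measurable ω) (hpos : ∀ t ∈ Ioc (0 : ℝ) 1, 0 < ω t)
    (hint : ∫⁻ r in Ioo (0 : ℝ) 1, ENNReal.ofReal (r * ω (1 - r)) < ⊤) {t : ℝ} (ht : 0 < t) :
    IntegrableOn (fun r => ω (1 - r)) (Ioo t 1) := by
  have hbound : ∀ᵐ r ∂volume.restrict (Ioo t 1), ‖r⁻¹‖ ≤ t⁻¹ := by
    filter_upwards [ae_restrict_mem measurableSet_Ioo] with r hr
    rw [norm_inv, Real.norm_of_nonneg (ht.trans hr.1).le]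
    exact inv_anti₀ ht hr.1.le
  refine (((integrableOn_mul_weight hmeas hpos hint).mono_set (Ioo_subset_Ioo_left ht.le)).bdd_mul
    measurable_inv.aestronglyMeasurable hbound).congr ?_
  filter_upwards [ae_restrict_mem measurableSet_Ioo] with r hr
  field_simp [(ht.trans hr.1).ne']

theorem setIntegral_weight_pos (hmeas : Measurable ω) (hpos : ∀ t ∈ Ioc (0 : ℝ) 1, 0 < ω t)
    (hint : ∫⁻ r in Ioo (0 : ℝ) 1, ENNReal.ofReal (r * ω (1 - r)) < ⊤) {t : ℝ}
    (ht : t ∈ Ioo (0 : ℝ) 1) : 0 < ∫ r in Ioo t 1, ω (1 - r) := by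
  have hsub : Ioo t 1 ⊆ Ioo 0 1 := Ioo_subset_Ioo_left ht.1.le
  have hnonneg : 0 ≤ᵐ[volume.restrict (Ioo t 1)] fun r => ω (1 - r) := by
    filter_upwards [ae_restrict_mem measurableSet_Ioo] with r hr
    exact (weight_comp_pos hpos (hsub hr)).le
  rw [setIntegral_pos_iff_support_of_nonneg_ae hnonneg
    (integrableOn_weight_Ioo hmeas hpos hint ht.1)]
  calc (0 : ENNReal) < volume (Ioo t 1) := by simpa using ht.2
    _ ≤ volume (Function.support (fun r => ω (1 - r)) ∩ Ioo t 1) :=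
        measure_mono fun r hr => ⟨(weight_comp_pos hpos (hsub hr)).ne', hr⟩

theorem pow_mul_integral_weight_le_wk (hmeas : Measurable ω)
    (hpos : ∀ t ∈ Ioc (0 : ℝ) 1, 0 < ω t)
    (hint : ∫⁻ r in Ioo (0 : ℝ) 1, ENNReal.ofReal (r * ω (1 - r)) < ⊤) {t : ℝ}
    (ht : t ∈ Ioo (0 : ℝ) 1) (k : ℕ) :
    t ^ (2 * k + 1) * (2 * ∫ r in Ioo t 1, ω (1 - r)) ≤ wk ω k := by
  have hsub : Ioo t 1 ⊆ Ioo 0 1 := Ioo_subset_Ioo_left ht.1.le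
  have hk := integrableOn_pow_succ_mul_weight hmeas hpos hint (2 * k)
  calc t ^ (2 * k + 1) * (2 * ∫ r in Ioo t 1, ω (1 - r))
      = 2 * ∫ r in Ioo t 1, t ^ (2 * k + 1) * ω (1 - r) := by rw [integral_const_mul]; ring
    _ ≤ 2 * ∫ r in Ioo t 1, r ^ (2 * k + 1) * ω (1 - r) := by
        refine mul_le_mul_of_nonneg_left (setIntegral_mono_on
          ((integrableOn_weight_Ioo hmeas hpos hint ht.1).const_mul _) (hk.mono_set hsub)
          measurableSet_Ioo fun r hr => ?_) zero_le_two
        gcongr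
        · exact (weight_comp_pos hpos (hsub hr)).le
        · exact ht.1.le
        · exact hr.1.le
    _ ≤ 2 * ∫ r in Ioo 0 1, r ^ (2 * k + 1) * ω (1 - r) := by
        refine mul_le_mul_of_nonneg_left (setIntegral_mono_set hk ?_ hsub.eventuallyLE) zero_le_two
        filter_upwards [ae_restrict_mem measurableSet_Ioo] with r hr
        exact mul_nonneg (pow_nonneg hr.1.le _) (weight_comp_pos hpos hr).le
    _ = wk ω k := rfl

theorem wk_pos (hmeas : Measurable ω) (hpos : ∀ t ∈ Ioc (0 : ℝ) 1, 0 < ω t)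
    (hint : ∫⁻ r in Ioo (0 : ℝ) 1, ENNReal.ofReal (r * ω (1 - r)) < ⊤) (k : ℕ) : 0 < wk ω k := by
  have ht : (1 / 2 : ℝ) ∈ Ioo (0 : ℝ) 1 := by norm_num
  have := setIntegral_weight_pos hmeas hpos hint ht
  exact lt_of_lt_of_le (by positivity) (pow_mul_integral_weight_le_wk hmeas hpos hint ht k)

end Weight

theorem norm_ofReal_mul_exp_mul_I {r : ℝ} (hr : 0 ≤ r) (θ : ℝ) : ‖(r : ℂ) * exp (θ * I)‖ = r := by
  rw [norm_mul, norm_exp_ofReal_mul_I, mul_one, norm_real, Real.norm_of_nonneg hr]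

theorem integral_ball_eq_setIntegral_polar {E : Type*} [NormedAddCommGroup E] [NormedSpace ℝ E]
    (F : ℂ → E) :
    ∫ z in Metric.ball (0 : ℂ) 1, F z
      = ∫ p in Ioo (0 : ℝ) 1 ×ˢ Ioo (-π) π, p.1 • F (p.1 * exp (p.2 * I)) := by
  set S := Ioo (0 : ℝ) 1 ×ˢ Ioo (-π) π
  have hindicator :
      EqOn (fun p : ℝ × ℝ => p.1 • (Metric.ball 0 1).indicator F (Complex.polarCoord.symm p))
      (S.indicator fun p => p.1 • F (p.1 * exp (p.2 * I))) polarCoord.target := by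
    rintro ⟨r, θ⟩ ⟨hr, hθ⟩
    have hsymm : Complex.polarCoord.symm (r, θ) = (r : ℂ) * exp (θ * I) := by
      rw [Complex.polarCoord_symm_apply, exp_mul_I]; push_cast; ring
    have hmem : Complex.polarCoord.symm (r, θ) ∈ Metric.ball 0 1 ↔ (r, θ) ∈ S := by
      rw [mem_ball_zero_iff, hsymm, norm_ofReal_mul_exp_mul_I (le_of_lt hr)]
      exact ⟨fun h => ⟨⟨hr, h⟩, hθ⟩, fun h => h.1.2⟩
    dsimp only
    by_cases h : (r, θ) ∈ S
    · rw [indicator_of_mem (hmem.mpr h), indicator_of_mem h, hsymm]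
    · rw [indicator_of_notMem (mt hmem.mp h), indicator_of_notMem h, smul_zero]
  have hS : S ⊆ polarCoord.target := by
    rw [polarCoord_target]
    exact prod_mono Ioo_subset_Ioi_self subset_rfl
  rw [← integral_indicator measurableSet_ball, ← Complex.integral_comp_polarCoord_symm,
    setIntegral_congr_fun polarCoord.open_target.measurableSet hindicator,
    setIntegral_indicator (measurableSet_Ioo.prod measurableSet_Ioo), inter_eq_right.mpr hS]

theorem norm_sum_mul_pow_le {s : Finset ℕ} (a : ℕ → ℂ) {z : ℂ} (hz : ‖z‖ ≤ 1) :
    ‖∑ k ∈ s, a k * z ^ k‖ ≤ ∑ k ∈ s, ‖a k‖ :=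
  (norm_sum_le _ _).trans <| Finset.sum_le_sum fun k _ => by
    rw [norm_mul, norm_pow]
    exact mul_le_of_le_one_right (norm_nonneg _) (pow_le_one₀ (norm_nonneg _) hz)

theorem integral_ball_norm_sq_sum_pow_mul_weight {ω : ℝ → ℝ} (hmeas : Measurable ω)
    (hpos : ∀ t ∈ Ioc (0 : ℝ) 1, 0 < ω t)
    (hint : ∫⁻ r in Ioo (0 : ℝ) 1, ENNReal.ofReal (r * ω (1 - r)) < ⊤) (s : Finset ℕ)
    (a : ℕ → ℂ) :
    ∫ z in Metric.ball (0 : ℂ) 1, ‖∑ k ∈ s, a k * z ^ k‖ ^ 2 * ω (1 - ‖z‖)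
      = π * ∑ k ∈ s, ‖a k‖ ^ 2 * wk ω k := by
  set S := Ioo (0 : ℝ) 1 ×ˢ Ioo (-π) π
  have hS : ∀ᵐ p ∂(volume.restrict (Ioo (0 : ℝ) 1)).prod (volume.restrict (Ioo (-π) π)), p ∈ S := by
    rw [Measure.prod_restrict]
    exact ae_restrict_mem (measurableSet_Ioo.prod measurableSet_Ioo)
  have hbound : ∀ᵐ p ∂(volume.restrict (Ioo (0 : ℝ) 1)).prod (volume.restrict (Ioo (-π) π)),
      ‖‖∑ k ∈ s, a k * ((p.1 : ℂ) * exp (p.2 * I)) ^ k‖ ^ 2‖ ≤ (∑ k ∈ s, ‖a k‖) ^ 2 := by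
    filter_upwards [hS] with p hp
    rw [norm_pow, norm_norm]
    gcongr
    exact norm_sum_mul_pow_le a (by rw [norm_ofReal_mul_exp_mul_I hp.1.1.le]; exact hp.1.2.le)
  have hprod : IntegrableOn (fun p : ℝ × ℝ => p.1 •
      (‖∑ k ∈ s, a k * ((p.1 : ℂ) * exp (p.2 * I)) ^ k‖ ^ 2 * ω (1 - ‖(p.1 : ℂ) * exp (p.2 * I)‖)))
      S (volume.prod volume) := by
    rw [IntegrableOn, ← Measure.prod_restrict]
    refine (((integrableOn_mul_weight hmeas hpos hint).comp_fst _).mul_bdd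
      (by fun_prop : Continuous fun p : ℝ × ℝ =>
        ‖∑ k ∈ s, a k * ((p.1 : ℂ) * exp (p.2 * I)) ^ k‖ ^ 2).aestronglyMeasurable hbound).congr ?_
    filter_upwards [hS] with p hp
    rw [norm_ofReal_mul_exp_mul_I hp.1.1.le, smul_eq_mul]
    ring
  have hinner : ∀ r ∈ Ioo (0 : ℝ) 1, ∫ θ in Ioo (-π) π, r •
      (‖∑ k ∈ s, a k * ((r : ℂ) * exp (θ * I)) ^ k‖ ^ 2 * ω (1 - ‖(r : ℂ) * exp (θ * I)‖))
      = ∑ k ∈ s, 2 * π * ‖a k‖ ^ 2 * (r ^ (2 * k + 1) * ω (1 - r)) := by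
    intro r hr
    have hcircle : ∀ θ : ℝ, ∑ k ∈ s, a k * ((r : ℂ) * exp (θ * I)) ^ k
        = ∑ k ∈ s, a k * r ^ k * exp (k * θ * I) := fun θ =>
      Finset.sum_congr rfl fun k _ => by rw [mul_pow, ← Complex.exp_nat_mul]; ring_nf
    simp_rw [norm_ofReal_mul_exp_mul_I hr.1.le, smul_eq_mul, hcircle,
      show ∀ x : ℝ, r * (x * ω (1 - r)) = r * ω (1 - r) * x from fun x => by ring]
    rw [integral_const_mul, ← integral_Ioc_eq_integral_Ioo,
      ← intervalIntegral.integral_of_le (by linarith [pi_pos]), integral_norm_sq_sum_exp,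
      Finset.mul_sum, Finset.mul_sum]
    refine Finset.sum_congr rfl fun k _ => ?_
    rw [norm_mul, norm_pow, norm_real, Real.norm_of_nonneg hr.1.le]
    ring
  rw [integral_ball_eq_setIntegral_polar, Measure.volume_eq_prod, setIntegral_prod _ hprod,
    setIntegral_congr_fun measurableSet_Ioo hinner, integral_finsetSum _ fun k _ =>
      (integrableOn_pow_succ_mul_weight hmeas hpos hint (2 * k)).const_mul _, Finset.mul_sum]
  refine Finset.sum_congr rfl fun k _ => ?_
  rw [integral_const_mul, wk]
  ring

theorem summable_norm_laurentCoeff_sq_div_wk {ω : ℝ → ℝ} (hmeas : Measurable ω)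
    (hpos : ∀ t ∈ Ioc (0 : ℝ) 1, 0 < ω t)
    (hint : ∫⁻ r in Ioo (0 : ℝ) 1, ENNReal.ofReal (r * ω (1 - r)) < ⊤) {U : Set ℂ} (hU : IsOpen U)
    (hUnbhd : {ζ : ℂ | 1 ≤ ‖ζ‖} ⊆ U) {γ : ℂ → ℂ} (hγ : DifferentiableOn ℂ γ U) :
    Summable fun k : ℕ => ‖laurentCoeff γ (-(k + 1 : ℤ))‖ ^ 2 / wk ω k := by
  obtain ⟨s, ⟨hs0, hs1⟩, hsU⟩ := exists_radius_lt_one_of_exterior_subset hU hUnbhd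
  obtain ⟨A, hA⟩ := exists_norm_laurentCoeff_neg_le hs0 hs1.le
    (hγ.mono fun z hz => hsU z (by simpa using hz.2))
  -- any `t ∈ (s, 1)` works: `ωₖ ≥ 2t (∫ₜ¹ ω(1-r) dr) t^{2k}` beats `‖c₋₍ₖ₊₁₎‖² = O(s^{2k})`
  obtain ⟨t, hst, ht1⟩ := exists_between hs1
  have ht : t ∈ Ioo (0 : ℝ) 1 := ⟨hs0.trans hst, ht1⟩
  have hJ := setIntegral_weight_pos hmeas hpos hint ht
  refine summable_norm_sq_div_of_geometric_bounds (B := 2 * t * ∫ r in Ioo t 1, ω (1 - r))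
    (mul_pos (mul_pos two_pos ht.1) hJ) hs0.le
    (pow_lt_pow_left₀ hst hs0.le two_ne_zero) hA fun k => ?_
  calc 2 * t * (∫ r in Ioo t 1, ω (1 - r)) * (t ^ 2) ^ k
      = t ^ (2 * k + 1) * (2 * ∫ r in Ioo t 1, ω (1 - r)) := by ring
    _ ≤ wk ω k := pow_mul_integral_weight_le_wk hmeas hpos hint ht k

/-- let `γ` be holomorphic on a neighborhood of `{ |ζ| ≥ 1 }`
with Laurent coefficients `c_j = (1/2π) ∫₀^{2π} γ(e^{iθ}) e^{-ijθ} dθ`, and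
let `h(z) = Σ_{k=0}^N aₖ zᵏ` be a polynomial. Then
`-(1/(2πi)) ∮_{|ξ|=1} γ(ξ)h(ξ) dξ = -Σ_{k=0}^N c_{-(k+1)} aₖ`, and this
quantity is bounded by `(1/π) ρ(γ) ‖h‖_{B₂(𝔻,ω)}`, where
`ρ(γ) = (π Σ_{k≥1} |c_{-k}|²/ω_{k-1})^{1/2}`. -/
theorem cauchy_transform_stmt5
    (ω : ℝ → ℝ) (hmeas : Measurable ω) (hpos : ∀ t ∈ Set.Ioc (0:ℝ) 1, 0 < ω t)
    (hint : ∫⁻ r in Set.Ioo (0:ℝ) 1, ENNReal.ofReal (r * ω (1 - r)) < ⊤)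
    (U : Set ℂ) (hU : IsOpen U) (hUnbhd : {ζ : ℂ | 1 ≤ ‖ζ‖} ⊆ U)
    (γ : ℂ → ℂ) (hγ : DifferentiableOn ℂ γ U)
    (c : ℤ → ℂ)
    (hc : ∀ j : ℤ, c j = (1 / (2 * Real.pi) : ℂ) *
      ∫ θ in (0:ℝ)..(2 * Real.pi),
        γ (Complex.exp (θ * Complex.I)) * Complex.exp (-(j : ℂ) * θ * Complex.I))
    (N : ℕ) (a : ℕ → ℂ) (h : ℂ → ℂ)
    (hh : ∀ z : ℂ, h z = ∑ k ∈ Finset.range (N + 1), a k * z ^ k) :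
    -((2 * (Real.pi : ℂ) * Complex.I)⁻¹ * ∮ ξ in C(0, 1), γ ξ * h ξ) =
        -∑ k ∈ Finset.range (N + 1), c (-(k + 1 : ℤ)) * a k ∧
    ‖-((2 * (Real.pi : ℂ) * Complex.I)⁻¹ * ∮ ξ in C(0, 1), γ ξ * h ξ)‖ ≤
      (1 / Real.pi) *
        Real.sqrt (Real.pi * ∑' k : ℕ, ‖c (-(k + 1 : ℤ))‖ ^ 2 / wk ω k) *
        Real.sqrt (∫ z in Metric.ball (0:ℂ) 1,
          ‖h z‖ ^ 2 * ω (1 - ‖z‖)) := by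
  obtain rfl : c = laurentCoeff γ := funext hc
  obtain rfl : h = fun z => ∑ k ∈ Finset.range (N + 1), a k * z ^ k := funext hh
  have hcontour :
      (2 * (π : ℂ) * I)⁻¹ * ∮ ξ in C(0, 1), γ ξ * ∑ k ∈ Finset.range (N + 1), a k * ξ ^ k =
        ∑ k ∈ Finset.range (N + 1), laurentCoeff γ (-(k + 1 : ℤ)) * a k := by
    rw [circleIntegral_mul_sum_pow (hγ.continuousOn.mono fun z hz => hUnbhd (by simp_all)),
      inv_mul_cancel_left₀ (by simp [pi_ne_zero])]
  have hscale : ∀ x y : ℝ, 1 / π * √(π * x) * √(π * y) = √x * √y := fun x y => by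
    rw [Real.sqrt_mul pi_pos.le, Real.sqrt_mul pi_pos.le]
    field_simp
    rw [Real.sq_sqrt pi_pos.le]
  refine ⟨by rw [hcontour], ?_⟩
  rw [hcontour, norm_neg, integral_ball_norm_sq_sum_pow_mul_weight hmeas hpos hint, hscale]
  exact norm_sum_mul_le_sqrt_tsum_mul_sqrt_sum (wk_pos hmeas hpos hint)
    (summable_norm_laurentCoeff_sq_div_wk hmeas hpos hint hU hUnbhd hγ) _
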